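/- Let ρ : ℝ → ℝ be a positive, C¹, L-periodic function with ∫₀^L ρ dx = m > 0. Then the pointwise bound 1/ρ(x) ≤ L ∫₀^L ρ(y) |∂_y(1/ρ)(y)|² dy + 2L/m holds for all x ∈ ℝ. -/

import Mathlib

/-!
With `f = 1/ρ`, let `f` attain its maximum `M` at `x₀` and let `ρ(c) = m/L` be a mean-value point,
so that `f(c) = L/m`. Then `M - L/m ≤ ∫₀^L |f'|`, and the weighted AM–GM inequality
`2|f'| ≤ L ρ f'² + f/L` (recall `ρ f = 1`) together with `∫₀^L f ≤ L M` gives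
`∫₀^L |f'| ≤ (L ∫₀^L ρ f'² + M) / 2`. Absorbing `M/2` yields `M ≤ L ∫₀^L ρ f'² + 2L/m`.
-/

open intervalIntegral MeasureTheory Set

theorem Function.Periodic.exists_mem_Icc_forall_le {α : Type*} [LinearOrder α]
    [TopologicalSpace α] [ClosedIciTopology α] {f : ℝ → α} {c : ℝ}
    (hper : Function.Periodic f c) (hc : 0 < c) (hf : Continuous f) :
    ∃ x₀ ∈ Icc 0 c, ∀ y, f y ≤ f x₀ := by
  obtain ⟨x₀, hx₀, hmax⟩ :=
    isCompact_Icc.exists_isMaxOn (nonempty_Icc.2 hc.le) hf.continuousOn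
  refine ⟨x₀, hx₀, fun y => ?_⟩
  obtain ⟨z, hz, hyz⟩ := hper.exists_mem_Ico₀ hc y
  exact hyz ▸ hmax (Ico_subset_Icc_self hz)

theorem abs_le_weighted_sq_add_inv {r t : ℝ} (hr : 0 < r) (ht : 0 < t) (d : ℝ) :
    |d| ≤ (t * (r * d ^ 2) + 1 / r / t) / 2 := by
  have hsq : t * (r * d ^ 2) + 1 / r / t - 2 * |d| = (t * r * |d| - 1) ^ 2 / (t * r) := by
    rw [← sq_abs d]
    field_simp
    ring
  have : 0 ≤ (t * r * |d| - 1) ^ 2 / (t * r) := by positivity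
  linarith

theorem abs_sub_le_integral_abs_deriv {f : ℝ → ℝ} {s t a b : ℝ} (hf : ContDiff ℝ 1 f)
    (ha : a ∈ Icc s t) (hb : b ∈ Icc s t) :
    |f b - f a| ≤ ∫ y in s..t, |deriv f y| := by
  wlog hab : a ≤ b generalizing a b
  · rw [abs_sub_comm]
    exact this hb ha (le_of_not_ge hab)
  have hi : ∀ u v, IntervalIntegrable (fun y => |deriv f y|) volume u v :=
    fun u v => (hf.continuous_deriv le_rfl).abs.intervalIntegrable u v
  calc |f b - f a| ≤ ∫ y in a..b, |deriv f y| :=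
        norm_sub_le_integral_of_norm_deriv_le_of_le hab hf.continuous.continuousOn
          (hf.differentiable one_ne_zero).differentiableOn (ae_of_all _ fun y _ => le_rfl)
          (hi a b)
    _ ≤ ∫ y in s..t, |deriv f y| :=
        integral_mono_interval ha.1 hab hb.2 (ae_of_all _ fun y => abs_nonneg _) (hi s t)

theorem integral_abs_le_weighted_sq_add_inv {ρ g : ℝ → ℝ} {s t r : ℝ} (hst : s ≤ t) (hr : 0 < r)
    (hρ : Continuous ρ) (hpos : ∀ y, 0 < ρ y) (hg : Continuous g) :
    ∫ y in s..t, |g y| ≤ (r * ∫ y in s..t, ρ y * g y ^ 2) / 2 + (∫ y in s..t, 1 / ρ y) / r / 2 := by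
  have hi₁ : IntervalIntegrable (fun y => ρ y * g y ^ 2) volume s t :=
    (hρ.mul (hg.pow 2)).intervalIntegrable _ _
  have hi₂ : IntervalIntegrable (fun y => 1 / ρ y) volume s t :=
    (continuous_const.div hρ fun y => (hpos y).ne').intervalIntegrable _ _
  calc ∫ y in s..t, |g y| ≤ ∫ y in s..t, (r * (ρ y * g y ^ 2) + 1 / ρ y / r) / 2 :=
        integral_mono_on hst (hg.abs.intervalIntegrable _ _)
          (((hi₁.const_mul r).add (hi₂.div_const r)).div_const 2)
          fun y _ => abs_le_weighted_sq_add_inv (hpos y) hr (g y)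
    _ = _ := by
        rw [intervalIntegral.integral_div, integral_add (hi₁.const_mul r) (hi₂.div_const r),
          intervalIntegral.integral_const_mul, intervalIntegral.integral_div, add_div]

theorem inv_density_bound_general (L m : ℝ) (hL : 0 < L) (ρ : ℝ → ℝ)
    (hρ : ContDiff ℝ 1 ρ) (hpos : ∀ x, 0 < ρ x) (hper : Function.Periodic ρ L)
    (hMass : (∫ x in (0:ℝ)..L, ρ x) = m) :
    ∀ x : ℝ, 1 / ρ x
      ≤ L * (∫ y in (0:ℝ)..L, ρ y * (deriv (fun z => 1 / ρ z) y) ^ 2) + 2 * L / m := by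
  intro x
  set f : ℝ → ℝ := fun z => 1 / ρ z
  have hf : ContDiff ℝ 1 f := contDiff_const.div hρ fun z => (hpos z).ne'
  have hfper : Function.Periodic f L := fun y => by simp only [f, hper y]
  obtain ⟨x₀, hx₀, hmax⟩ := hfper.exists_mem_Icc_forall_le hL hf.continuous
  obtain ⟨c, hc, hρc⟩ := exists_eq_interval_average hL.ne hρ.continuous.continuousOn
  rw [uIoo_of_le hL.le] at hc
  have hfc : f c = L / m := by
    simp only [f, hρc, interval_average_eq_div, hMass, sub_zero, one_div_div]
  have hosc : f x₀ - f c ≤ ∫ y in (0:ℝ)..L, |deriv f y| :=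
    (le_abs_self _).trans (abs_sub_le_integral_abs_deriv hf (Ioo_subset_Icc_self hc) hx₀)
  have hamgm := integral_abs_le_weighted_sq_add_inv hL.le hL hρ.continuous hpos
    (hf.continuous_deriv le_rfl)
  have hmean : (∫ y in (0:ℝ)..L, f y) / L ≤ f x₀ := by
    rw [div_le_iff₀ hL]
    simpa [mul_comm] using integral_mono_on (μ := volume) hL.le (hf.continuous.intervalIntegrable _ _)
      intervalIntegrable_const fun y _ => hmax y
  have hx := hmax x
  rw [mul_div_assoc]
  linarith

/-- pointwise upper bound for 1/ρ in terms of ∫ρ|∂_x(1/ρ)|² and the mass. -/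
theorem inv_density_bound (L m : ℝ) (hL : 0 < L) (hm : 0 < m) (ρ : ℝ → ℝ)
    (hρ : ContDiff ℝ 1 ρ) (hpos : ∀ x, 0 < ρ x) (hper : Function.Periodic ρ L)
    (hMass : (∫ x in (0:ℝ)..L, ρ x) = m) :
    ∀ x : ℝ, 1 / ρ x
      ≤ L * (∫ y in (0:ℝ)..L, ρ y * (deriv (fun z => 1 / ρ z) y) ^ 2) + 2 * L / m :=
  inv_density_bound_general L m hL ρ hρ hpos hper hMass
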